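/- arXiv:2506.09394 — 2 statements merged into one kernel-verified Lean document; each statement's English description precedes it below -/
import Mathlib

section
/- Let A ∈ ℝ^{m×n}, b ∈ ℝ^m with Ax = b consistent, B ∈ ℝ^{n×n} symmetric positive definite, Q ∈ ℝ^{d×m}, and let x^0 satisfy QAx^0 = Qb. Let x* be the minimizer of ||x − x^0||_B over all x with Ax = b. Let P := I − (Q A B^{−1/2})† Q A B^{−1/2}, and for a sketching matrix S ∈ ℝ^{ℓ×m} let Z := P B^{−1/2} Aᵀ Sᵀ (S A B^{−1/2} P B^{−1/2} Aᵀ Sᵀ)† S A B^{−1/2} P, the orthogonal projector onto range(P B^{−1/2} Aᵀ Sᵀ). If x^{k+1} is the minimizer of ||x − x^k||_B subject to SAx = Sb and QAx = Qb, then B^{1/2}(x^{k+1} − x*) = (I − Z) B^{1/2}(x^k − x*). -/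
/-!
Whitening by `z = B^{1/2} x` turns the `B`-norm into the Euclidean norm and `A` into
`C = A B^{-1/2}`. Let `e, e'` be the whitened errors of `x^k, x^{k+1}` and `G = S C P`, so that
`Z = Gᵀ (G Gᵀ)† G`. As `P` is the orthogonal projector onto `ker (Q C)`, the new error `e'` lies
in `ker G`, hence `Z e' = 0`. First-order optimality of `x^{k+1}` makes the step `e' - e`
orthogonal to `ker (S C) ∩ ker (Q C)`; since `e' - e` is fixed by `P`, it is then orthogonal to
all of `ker G`, i.e. it lies in `range Gᵀ`, so `Z (e' - e) = e' - e`. Subtracting,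
`(I - Z) e = e'`.
-/

open Matrix

/-- `Mp` is the Moore–Penrose pseudoinverse of `M` (the four Penrose conditions,
which characterize it uniquely). -/
def IsMoorePenrose {k l : Type*} [Fintype k] [Fintype l]
    (M : Matrix k l ℝ) (Mp : Matrix l k ℝ) : Prop :=
  M * Mp * M = M ∧ Mp * M * Mp = Mp ∧ (M * Mp)ᵀ = M * Mp ∧ (Mp * M)ᵀ = Mp * M

/-- The positive semidefinite square root, as `Matrix.PosSemidef.sqrt` was defined in
Mathlib (Dec 2024), specialized to `ℝ`; it has since been removed from Mathlib. -/
noncomputable def Matrix.PosSemidef.sqrt {n : Type*} [Fintype n] [DecidableEq n]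
    {A : Matrix n n ℝ} (hA : A.PosSemidef) : Matrix n n ℝ :=
  hA.1.eigenvectorUnitary.1 * diagonal ((↑) ∘ (√·) ∘ hA.1.eigenvalues) *
  (star hA.1.eigenvectorUnitary : Matrix n n ℝ)

namespace Matrix.PosSemidef

variable {n : Type*} [Fintype n] [DecidableEq n] {A : Matrix n n ℝ}

lemma sqrt_mul_sqrt (hA : A.PosSemidef) : hA.sqrt * hA.sqrt = A := by
  set U := hA.1.eigenvectorUnitary
  have hD : diagonal ((↑) ∘ (√·) ∘ hA.1.eigenvalues) * diagonal ((↑) ∘ (√·) ∘ hA.1.eigenvalues) =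
      diagonal (RCLike.ofReal ∘ hA.1.eigenvalues : n → ℝ) := by
    rw [diagonal_mul_diagonal]
    congr 1
    funext i
    simp [Real.mul_self_sqrt (hA.eigenvalues_nonneg i)]
  calc hA.sqrt * hA.sqrt = U.1 * (diagonal ((↑) ∘ (√·) ∘ hA.1.eigenvalues) *
        ((star U : Matrix n n ℝ) * U.1) * diagonal ((↑) ∘ (√·) ∘ hA.1.eigenvalues)) *
        (star U : Matrix n n ℝ) := by simp only [Matrix.PosSemidef.sqrt, U, Matrix.mul_assoc]
    _ = A := by
      rw [Unitary.coe_star_mul_self, Matrix.mul_one, hD]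
      conv_rhs => rw [hA.1.spectral_theorem]
      simp [U, Unitary.conjStarAlgAut_apply]

lemma transpose_sqrt (hA : A.PosSemidef) : hA.sqrtᵀ = hA.sqrt := by
  have h : hA.sqrt.IsHermitian := by
    unfold Matrix.PosSemidef.sqrt
    simpa [star_eq_conjTranspose] using
      isHermitian_mul_mul_conjTranspose hA.1.eigenvectorUnitary.1
        (isHermitian_diagonal ((↑) ∘ (√·) ∘ hA.1.eigenvalues : n → ℝ))
  rw [← conjTranspose_eq_transpose_of_trivial]
  exact h

end Matrix.PosSemidef

namespace Matrix.PosDef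

variable {n : Type*} [Fintype n] [DecidableEq n] {B : Matrix n n ℝ}

lemma isUnit_det_sqrt (hB : B.PosDef) : IsUnit hB.posSemidef.sqrt.det :=
  (isUnit_iff_isUnit_det _).mp <|
    isUnit_of_mul_isUnit_left (hB.posSemidef.sqrt_mul_sqrt ▸ hB.isUnit)

lemma inv_sqrt_mul_sqrt (hB : B.PosDef) : hB.posSemidef.sqrt⁻¹ * hB.posSemidef.sqrt = 1 :=
  nonsing_inv_mul _ hB.isUnit_det_sqrt

lemma sqrt_mul_inv_sqrt (hB : B.PosDef) : hB.posSemidef.sqrt * hB.posSemidef.sqrt⁻¹ = 1 :=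
  mul_nonsing_inv _ hB.isUnit_det_sqrt

lemma transpose_inv_sqrt (hB : B.PosDef) : hB.posSemidef.sqrt⁻¹ᵀ = hB.posSemidef.sqrt⁻¹ := by
  rw [transpose_nonsing_inv, hB.posSemidef.transpose_sqrt]

end Matrix.PosDef

lemma dotProduct_mulVec_eq_zero_of_le_add_smul {n : Type*} [Fintype n] {B : Matrix n n ℝ}
    (hB : B.PosSemidef) {u v : n → ℝ}
    (h : ∀ t : ℝ, u ⬝ᵥ (B *ᵥ u) ≤ (u + t • v) ⬝ᵥ (B *ᵥ (u + t • v))) :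
    v ⬝ᵥ (B *ᵥ u) = 0 := by
  have hsymm : u ⬝ᵥ (B *ᵥ v) = v ⬝ᵥ (B *ᵥ u) := by
    rw [dotProduct_mulVec, ← mulVec_transpose, ← conjTranspose_eq_transpose_of_trivial, hB.1,
      dotProduct_comm]
  have hquad : ∀ t : ℝ, 0 ≤ v ⬝ᵥ (B *ᵥ v) * (t * t) + 2 * (v ⬝ᵥ (B *ᵥ u)) * t + 0 := by
    intro t
    have ht := h t
    simp only [mulVec_add, mulVec_smul, dotProduct_add, add_dotProduct, dotProduct_smul,
      smul_dotProduct, smul_eq_mul, hsymm] at ht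
    linarith
  have hdisc := discrim_le_zero hquad
  rw [discrim] at hdisc
  nlinarith [sq_nonneg (v ⬝ᵥ (B *ᵥ u))]

lemma dotProduct_mulVec_sub_eq_zero_of_forall_le {k l n : Type*} [Fintype n]
    {B : Matrix n n ℝ} (hB : B.PosSemidef)
    {C₁ : Matrix k n ℝ} {C₂ : Matrix l n ℝ} {c₁ : k → ℝ} {c₂ : l → ℝ} {a x w : n → ℝ}
    (hx₁ : C₁ *ᵥ x = c₁) (hx₂ : C₂ *ᵥ x = c₂)
    (hmin : ∀ y, C₁ *ᵥ y = c₁ → C₂ *ᵥ y = c₂ →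
      (x - a) ⬝ᵥ (B *ᵥ (x - a)) ≤ (y - a) ⬝ᵥ (B *ᵥ (y - a)))
    (hw₁ : C₁ *ᵥ w = 0) (hw₂ : C₂ *ᵥ w = 0) :
    w ⬝ᵥ (B *ᵥ (x - a)) = 0 :=
  dotProduct_mulVec_eq_zero_of_le_add_smul hB fun t => by
    simpa only [add_sub_right_comm] using hmin (x + t • w)
      (by rw [mulVec_add, mulVec_smul, hw₁, smul_zero, add_zero, hx₁])
      (by rw [mulVec_add, mulVec_smul, hw₂, smul_zero, add_zero, hx₂])

variable {k l m n : Type*} [Fintype k] [Fintype l] [Fintype m] [Fintype n]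

section Projection

variable [DecidableEq l] {M : Matrix k l ℝ} {Mp : Matrix l k ℝ}

lemma mul_one_sub_pinv_mul (h : M * Mp * M = M) : M * (1 - Mp * M) = 0 := by
  rw [Matrix.mul_sub, Matrix.mul_one, ← Matrix.mul_assoc, h, sub_self]

lemma isIdempotentElem_one_sub_pinv_mul (h : M * Mp * M = M) :
    IsIdempotentElem (1 - Mp * M) := by
  rw [IsIdempotentElem, Matrix.sub_mul, Matrix.one_mul, Matrix.mul_sub, Matrix.mul_one,
    Matrix.mul_assoc Mp M, ← Matrix.mul_assoc M Mp M, h]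
  abel

lemma one_sub_pinv_mul_mulVec_of_mulVec_eq_zero {v : l → ℝ} (hv : M *ᵥ v = 0) :
    (1 - Mp * M) *ᵥ v = v := by
  rw [sub_mulVec, one_mulVec, ← mulVec_mulVec, hv, mulVec_zero, sub_zero]

end Projection

lemma mul_transpose_mul_mul_eq_self {G : Matrix k l ℝ} {N : Matrix k k ℝ}
    (h : G * Gᵀ * N * (G * Gᵀ) = G * Gᵀ) : G * Gᵀ * N * G = G := by
  classical
  have hF : (1 - G * Gᵀ * N) * (G * Gᴴ) = 0 := by
    rw [conjTranspose_eq_transpose_of_trivial, Matrix.sub_mul, Matrix.one_mul, h, sub_self]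
  rw [mul_self_mul_conjTranspose_eq_zero, Matrix.sub_mul, Matrix.one_mul, sub_eq_zero] at hF
  exact hF.symm

lemma transpose_mul_mul_mulVec_eq_self {G : Matrix k l ℝ} {N : Matrix k k ℝ}
    (h : G * Gᵀ * N * G = G) {x : l → ℝ} (hx : ∀ v, G *ᵥ v = 0 → x ⬝ᵥ v = 0) :
    (Gᵀ * N * G) *ᵥ x = x := by
  set r := x - (Gᵀ * N * G) *ᵥ x
  have hGr : G *ᵥ r = 0 := by
    rw [mulVec_sub, mulVec_mulVec, ← Matrix.mul_assoc, ← Matrix.mul_assoc, h, sub_self]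
  have hrr : r ⬝ᵥ r = 0 := by
    calc r ⬝ᵥ r = x ⬝ᵥ r - ((N * G) *ᵥ x) ⬝ᵥ (G *ᵥ r) := by
          rw [dotProduct_mulVec, ← mulVec_transpose, mulVec_mulVec, ← sub_dotProduct,
            ← Matrix.mul_assoc]
      _ = 0 := by rw [hx r hGr, hGr, dotProduct_zero, sub_zero]
  exact (sub_eq_zero.mp (dotProduct_self_eq_zero.mp hrr)).symm

lemma sketch_project_error_update_euclidean [DecidableEq n] {C : Matrix m n ℝ}
    {Q : Matrix k m ℝ} {S : Matrix l m ℝ} {N1 : Matrix n k ℝ} {P : Matrix n n ℝ}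
    {N2 : Matrix l l ℝ} {Z : Matrix n n ℝ}
    (hN1 : Q * C * N1 * (Q * C) = Q * C) (hN1T : (N1 * (Q * C))ᵀ = N1 * (Q * C))
    (hP : P = 1 - N1 * (Q * C))
    (hN2 : S * C * P * Cᵀ * Sᵀ * N2 * (S * C * P * Cᵀ * Sᵀ) = S * C * P * Cᵀ * Sᵀ)
    (hZ : Z = P * Cᵀ * Sᵀ * N2 * (S * C * P))
    {e e' : n → ℝ} (he'S : (S * C) *ᵥ e' = 0) (he'Q : (Q * C) *ᵥ e' = 0)
    (hstepQ : (Q * C) *ᵥ (e' - e) = 0)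
    (hstep : ∀ v, (S * C) *ᵥ v = 0 → (Q * C) *ᵥ v = 0 → (e' - e) ⬝ᵥ v = 0) :
    e' = (1 - Z) *ᵥ e := by
  have hPT : Pᵀ = P := by rw [hP, transpose_sub, transpose_one, hN1T]
  have hPP : P * P = P := hP ▸ (isIdempotentElem_one_sub_pinv_mul hN1).eq
  have hQCP : Q * C * P = 0 := hP ▸ mul_one_sub_pinv_mul hN1
  have hPfix : ∀ v, (Q * C) *ᵥ v = 0 → P *ᵥ v = v := fun v hv =>
    hP ▸ one_sub_pinv_mul_mulVec_of_mulVec_eq_zero hv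
  set G := S * C * P
  have hGT : Gᵀ = P * Cᵀ * Sᵀ := by simp only [G, transpose_mul, hPT, Matrix.mul_assoc]
  have hGGT : G * Gᵀ = S * C * P * Cᵀ * Sᵀ := by
    rw [hGT]
    simp only [G, Matrix.mul_assoc]
    rw [← Matrix.mul_assoc P P, hPP]
  have hZG : Z = Gᵀ * N2 * G := by rw [hZ, hGT]
  have hGe' : G *ᵥ e' = 0 := by rw [← mulVec_mulVec, hPfix e' he'Q, he'S]
  have hstepG : ∀ v, G *ᵥ v = 0 → (e' - e) ⬝ᵥ v = 0 := by
    intro v hv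
    have hPv : (e' - e) ⬝ᵥ v = (e' - e) ⬝ᵥ (P *ᵥ v) := by
      rw [dotProduct_mulVec, ← mulVec_transpose, hPT, hPfix _ hstepQ]
    rw [hPv]
    exact hstep _ (by rwa [mulVec_mulVec]) (by rw [mulVec_mulVec, hQCP, zero_mulVec])
  have hZstep : Z *ᵥ (e' - e) = e' - e := hZG ▸
    transpose_mul_mul_mulVec_eq_self (mul_transpose_mul_mul_eq_self (by rwa [hGGT])) hstepG
  have hZe' : Z *ᵥ e' = 0 := by rw [hZG, ← mulVec_mulVec, hGe', mulVec_zero]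
  have hZe : Z *ᵥ e = Z *ᵥ e' - Z *ᵥ (e' - e) := by rw [← mulVec_sub, sub_sub_cancel]
  rw [sub_mulVec, one_mulVec, hZe, hZe', hZstep]
  abel

theorem stmt_1_general {m n d l : ℕ}
    (A : Matrix (Fin m) (Fin n) ℝ) (b : Fin m → ℝ)
    (B : Matrix (Fin n) (Fin n) ℝ) (hB : B.PosDef)
    (Q : Matrix (Fin d) (Fin m) ℝ) (S : Matrix (Fin l) (Fin m) ℝ)
    -- `Bh = B^{1/2}` and `Bih = B^{-1/2}`
    (Bh : Matrix (Fin n) (Fin n) ℝ) (hBh : Bh = hB.posSemidef.sqrt)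
    (Bih : Matrix (Fin n) (Fin n) ℝ) (hBih : Bih = (hB.posSemidef.sqrt)⁻¹)
    -- `N1 = (Q A B^{-1/2})†` and `P = I - N1 (Q A B^{-1/2})`
    (N1 : Matrix (Fin n) (Fin d) ℝ) (hN1 : IsMoorePenrose (Q * A * Bih) N1)
    (P : Matrix (Fin n) (Fin n) ℝ) (hP : P = 1 - N1 * (Q * A * Bih))
    -- `N2 = (S A B^{-1/2} P B^{-1/2} Aᵀ Sᵀ)†` and the projector `Z`
    (N2 : Matrix (Fin l) (Fin l) ℝ)
    (hN2 : IsMoorePenrose (S * A * Bih * P * Bih * Aᵀ * Sᵀ) N2)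
    (Z : Matrix (Fin n) (Fin n) ℝ)
    (hZ : Z = P * Bih * Aᵀ * Sᵀ * N2 * (S * A * Bih * P))
    -- `x*` is the minimizer of `‖x - x0‖_B` over `{x : Ax = b}`
    (xstar : Fin n → ℝ) (hxstar_sol : A *ᵥ xstar = b)
    -- the current iterate satisfies `Q A xk = Q b`
    (xk xk1 : Fin n → ℝ) (hxk : (Q * A) *ᵥ xk = Q *ᵥ b)
    -- `xk1` is the minimizer of `‖x - xk‖_B` subject to `SAx = Sb`, `QAx = Qb`
    (hxk1S : (S * A) *ᵥ xk1 = S *ᵥ b)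
    (hxk1Q : (Q * A) *ᵥ xk1 = Q *ᵥ b)
    (hxk1min : ∀ y : Fin n → ℝ, (S * A) *ᵥ y = S *ᵥ b → (Q * A) *ᵥ y = Q *ᵥ b →
      (xk1 - xk) ⬝ᵥ (B *ᵥ (xk1 - xk)) ≤ (y - xk) ⬝ᵥ (B *ᵥ (y - xk))) :
    Bh *ᵥ (xk1 - xstar) = (1 - Z) *ᵥ (Bh *ᵥ (xk - xstar)) := by
  have hBB : Bh * Bh = B := hBh ▸ hB.posSemidef.sqrt_mul_sqrt
  have hBT : Bhᵀ = Bh := hBh ▸ hB.posSemidef.transpose_sqrt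
  have hBihBh : Bih * Bh = 1 := hBih ▸ hBh ▸ hB.inv_sqrt_mul_sqrt
  have hBhBih : Bh * Bih = 1 := hBih ▸ hBh ▸ hB.sqrt_mul_inv_sqrt
  have hCT : (A * Bih)ᵀ = Bih * Aᵀ := by rw [transpose_mul, hBih, hB.transpose_inv_sqrt]
  have hwhite : ∀ {k : ℕ} (R : Matrix (Fin k) (Fin m) ℝ) u,
      (R * (A * Bih)) *ᵥ (Bh *ᵥ u) = (R * A) *ᵥ u := fun R u => by
    rw [mulVec_mulVec, Matrix.mul_assoc, Matrix.mul_assoc, hBihBh, Matrix.mul_one]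
  have hsol : ∀ {k : ℕ} (R : Matrix (Fin k) (Fin m) ℝ), (R * A) *ᵥ xstar = R *ᵥ b := fun R => by
    rw [← mulVec_mulVec, hxstar_sol]
  have hstep : Bh *ᵥ (xk1 - xstar) - Bh *ᵥ (xk - xstar) = Bh *ᵥ (xk1 - xk) := by
    rw [← mulVec_sub, sub_sub_sub_cancel_right]
  refine sketch_project_error_update_euclidean (C := A * Bih) (P := P)
    (by simpa only [Matrix.mul_assoc] using hN1.1)
    (by simpa only [Matrix.mul_assoc] using hN1.2.2.2)
    (by rw [hP, Matrix.mul_assoc]) (by simpa only [hCT, Matrix.mul_assoc] using hN2.1)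
    (by simp only [hZ, hCT, Matrix.mul_assoc])
    (by rw [hwhite, mulVec_sub, hxk1S, hsol, sub_self])
    (by rw [hwhite, mulVec_sub, hxk1Q, hsol, sub_self])
    (by rw [hstep, hwhite, mulVec_sub, hxk1Q, hxk, sub_self]) fun v hSv hQv => ?_
  rw [hstep]
  calc (Bh *ᵥ (xk1 - xk)) ⬝ᵥ v = (Bih *ᵥ v) ⬝ᵥ (B *ᵥ (xk1 - xk)) := by
        rw [← hBB, ← mulVec_mulVec, dotProduct_mulVec, ← mulVec_transpose, hBT, mulVec_mulVec,
          hBhBih, one_mulVec, dotProduct_comm]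
    _ = 0 := dotProduct_mulVec_sub_eq_zero_of_forall_le hB.posSemidef hxk1S hxk1Q hxk1min
        (by rwa [mulVec_mulVec, Matrix.mul_assoc]) (by rwa [mulVec_mulVec, Matrix.mul_assoc])

/-- fixed-point form of subspace-constrained sketch-and-project.
With `x*` the `B`-norm projection of `x0` onto `{x : Ax = b}` and
`Z = P B^{−1/2} Aᵀ Sᵀ (S A B^{−1/2} P B^{−1/2} Aᵀ Sᵀ)† S A B^{−1/2} P`, one step of the
constrained method satisfies `B^{1/2}(x^{k+1} − x*) = (I − Z) B^{1/2}(x^k − x*)`. -/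
theorem stmt_1 {m n d l : ℕ}
    (A : Matrix (Fin m) (Fin n) ℝ) (b : Fin m → ℝ)
    (hconsistent : ∃ x, A *ᵥ x = b)
    (B : Matrix (Fin n) (Fin n) ℝ) (hB : B.PosDef)
    (Q : Matrix (Fin d) (Fin m) ℝ) (S : Matrix (Fin l) (Fin m) ℝ)
    -- `Bh = B^{1/2}` and `Bih = B^{-1/2}`
    (Bh : Matrix (Fin n) (Fin n) ℝ) (hBh : Bh = hB.posSemidef.sqrt)
    (Bih : Matrix (Fin n) (Fin n) ℝ) (hBih : Bih = (hB.posSemidef.sqrt)⁻¹)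
    -- `N1 = (Q A B^{-1/2})†` and `P = I - N1 (Q A B^{-1/2})`
    (N1 : Matrix (Fin n) (Fin d) ℝ) (hN1 : IsMoorePenrose (Q * A * Bih) N1)
    (P : Matrix (Fin n) (Fin n) ℝ) (hP : P = 1 - N1 * (Q * A * Bih))
    -- `N2 = (S A B^{-1/2} P B^{-1/2} Aᵀ Sᵀ)†` and the projector `Z`
    (N2 : Matrix (Fin l) (Fin l) ℝ)
    (hN2 : IsMoorePenrose (S * A * Bih * P * Bih * Aᵀ * Sᵀ) N2)
    (Z : Matrix (Fin n) (Fin n) ℝ)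
    (hZ : Z = P * Bih * Aᵀ * Sᵀ * N2 * (S * A * Bih * P))
    -- the initial iterate satisfies `Q A x0 = Q b`
    (x0 : Fin n → ℝ) (hx0 : (Q * A) *ᵥ x0 = Q *ᵥ b)
    -- `x*` is the minimizer of `‖x - x0‖_B` over `{x : Ax = b}`
    (xstar : Fin n → ℝ) (hxstar_sol : A *ᵥ xstar = b)
    (hxstar_min : ∀ y : Fin n → ℝ, A *ᵥ y = b →
      (xstar - x0) ⬝ᵥ (B *ᵥ (xstar - x0)) ≤ (y - x0) ⬝ᵥ (B *ᵥ (y - x0)))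
    -- the current iterate satisfies `Q A xk = Q b`
    (xk xk1 : Fin n → ℝ) (hxk : (Q * A) *ᵥ xk = Q *ᵥ b)
    -- `xk1` is the minimizer of `‖x - xk‖_B` subject to `SAx = Sb`, `QAx = Qb`
    (hxk1S : (S * A) *ᵥ xk1 = S *ᵥ b)
    (hxk1Q : (Q * A) *ᵥ xk1 = Q *ᵥ b)
    (hxk1min : ∀ y : Fin n → ℝ, (S * A) *ᵥ y = S *ᵥ b → (Q * A) *ᵥ y = Q *ᵥ b →
      (xk1 - xk) ⬝ᵥ (B *ᵥ (xk1 - xk)) ≤ (y - xk) ⬝ᵥ (B *ᵥ (y - xk))) :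
    Bh *ᵥ (xk1 - xstar) = (1 - Z) *ᵥ (Bh *ᵥ (xk - xstar)) :=
  stmt_1_general A b B hB Q S Bh hBh Bih hBih N1 hN1 P hP N2 hN2 Z hZ xstar hxstar_sol xk xk1 hxk
    hxk1S hxk1Q hxk1min
end

section
/- Let A ∈ ℝ^{m×n} and x* be any minimizer of ||Ax − b||₂. Fix S ⊆ [n], let Π_{A,S} be the orthogonal projector onto the span of the columns of A indexed by S, and let A° := A − Π_{A,S} A with ||A°||_F > 0. Let {x^k}_{k≥0} be the least-squares SC-RCD iterates: x^0 satisfies (A_{:,S})ᵀ(A x^0 − b) = 0, and given x^k with residual r^k = A x^k − b and a random block J of ℓ columns sampled independently with probabilities ||A°_{:,j}||₂² / ||A°||_F², set α^k := (((A°)ᵀA°)_{J,J})† (A°_{:,J})ᵀ r^k, β^k := C_{:,J} α^k with C := ((AᵀA)_{S,S})† (AᵀA)_{S,:}, and x^{k+1} := x^k − e_J α^k + e_S β^k. Then E||x^k − x*||_{AᵀA}² ≤ (1 − σmin⁺(A°)² / ||A°||_F²)^{kℓ} · ||x^0 − x*||_{AᵀA}², where σmin⁺(A°) is the smallest nonzero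 singular value of A°. -/
open Matrix

/-- The smallest nonzero eigenvalue of a square real matrix
(with junk value `sInf ∅ = 0` if every eigenvalue is zero). -/
noncomputable def lamMinPos {n : ℕ} (M : Matrix (Fin n) (Fin n) ℝ) : ℝ :=
  sInf {μ : ℝ | μ ≠ 0 ∧ ∃ v : Fin n → ℝ, v ≠ 0 ∧ M *ᵥ v = μ • v}

/-- The squared Frobenius norm of a matrix. -/
def frobSq {a b : ℕ} (M : Matrix (Fin a) (Fin b) ℝ) : ℝ := ∑ i, ∑ j, (M i j) ^ 2

/-- The trajectory of an iterative method: `traj step x0 k ω` is the `k`-th iterate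
obtained from `x0` using the random draws `ω 0, …, ω (k-1)`. -/
def traj {V I : Type*} (step : I → V → V) (x0 : V) : (k : ℕ) → (Fin k → I) → V
  | 0, _ => x0
  | k + 1, ω => step (ω (Fin.last k)) (traj step x0 k (Fin.init ω))

set_option linter.unusedSectionVars false
set_option linter.unusedVariables false
set_option maxHeartbeats 1000000

section aux
variable {k l : Type*} [Fintype k] [Fintype l]

lemma mp_unique {M : Matrix k l ℝ} {B B' : Matrix l k ℝ}
    (hB : IsMoorePenrose M B) (hB' : IsMoorePenrose M B') : B = B' := by
  obtain ⟨b1, b2, b3, b4⟩ := hB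
  obtain ⟨c1, c2, c3, c4⟩ := hB'
  have h1 : M * B = M * B' := by
    calc M * B = (M * B)ᵀ := b3.symm
    _ = Bᵀ * Mᵀ := transpose_mul _ _
    _ = Bᵀ * (M * B' * M)ᵀ := by rw [c1]
    _ = (M * B)ᵀ * (M * B')ᵀ := by
        simp only [transpose_mul, Matrix.mul_assoc]
    _ = (M * B) * (M * B') := by rw [b3, c3]
    _ = (M * B * M) * B' := by simp only [Matrix.mul_assoc]
    _ = M * B' := by rw [b1]
  have h2 : B * M = B' * M := by
    calc B * M = (B * M)ᵀ := b4.symm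
    _ = Mᵀ * Bᵀ := transpose_mul _ _
    _ = (M * B' * M)ᵀ * Bᵀ := by rw [c1]
    _ = (B' * M)ᵀ * (B * M)ᵀ := by
        simp only [transpose_mul, Matrix.mul_assoc]
    _ = (B' * M) * (B * M) := by rw [b4, c4]
    _ = B' * (M * B * M) := by simp only [Matrix.mul_assoc]
    _ = B' * M := by rw [b1]
  calc B = B * M * B := b2.symm
  _ = B' * M * B := by rw [h2]
  _ = B' * (M * B') := by rw [Matrix.mul_assoc, h1]
  _ = B' := by rw [← Matrix.mul_assoc, c2]

lemma mp_symm {M B : Matrix k k ℝ} (hM : Mᵀ = M) (hB : IsMoorePenrose M B) : Bᵀ = B := by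
  obtain ⟨b1, b2, b3, b4⟩ := hB
  have : IsMoorePenrose M Bᵀ := by
    refine ⟨?_, ?_, ?_, ?_⟩
    · calc M * Bᵀ * M = (Mᵀ * B * Mᵀ)ᵀ := by simp only [transpose_mul, transpose_transpose, Matrix.mul_assoc]
      _ = M := by rw [hM, b1, hM]
    · calc Bᵀ * M * Bᵀ = (B * Mᵀ * B)ᵀ := by simp only [transpose_mul, transpose_transpose, Matrix.mul_assoc]
      _ = Bᵀ := by rw [hM, b2]
    · calc (M * Bᵀ)ᵀ = B * Mᵀ := by simp [transpose_mul]
      _ = B * M := by rw [hM]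
      _ = (B * M)ᵀ := b4.symm
      _ = Mᵀ * Bᵀ := transpose_mul _ _
      _ = M * Bᵀ := by rw [hM]
    · calc (Bᵀ * M)ᵀ = Mᵀ * B := by simp [transpose_mul]
      _ = M * B := by rw [hM]
      _ = (M * B)ᵀ := b3.symm
      _ = Bᵀ * Mᵀ := transpose_mul _ _
      _ = Bᵀ * M := by rw [hM]
  exact mp_unique this ⟨b1, b2, b3, b4⟩

lemma tmul_self_zero {M : Matrix k l ℝ} (h : Mᵀ * M = 0) : M = 0 := by
  have h2 : Mᴴ * M = 0 := by rwa [conjTranspose_eq_transpose_of_trivial]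
  exact conjTranspose_mul_self_eq_zero.mp h2

/-- `M * (B * (MᵀM)) = M` when `B` is the pseudoinverse of `MᵀM`. -/
lemma mul_pinv_tmul {M : Matrix k l ℝ} {B : Matrix l l ℝ}
    (hB : IsMoorePenrose (Mᵀ * M) B) : M * (B * (Mᵀ * M)) = M := by
  have hGt : (Mᵀ * M)ᵀ = Mᵀ * M := by simp [transpose_mul]
  have hBs : Bᵀ = B := mp_symm hGt hB
  obtain ⟨b1, b2, b3, b4⟩ := hB
  set G := Mᵀ * M with hG
  have key : (M * (B * G) - M)ᵀ * (M * (B * G) - M) = 0 := by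
    have e1 : (M * (B * G))ᵀ * (M * (B * G)) = G * B * G * B * G := by
      calc (M * (B * G))ᵀ * (M * (B * G)) = Gᵀ * Bᵀ * ((Mᵀ * M) * (B * G)) := by
            simp only [transpose_mul, Matrix.mul_assoc]
      _ = G * B * (G * (B * G)) := by rw [hGt, hBs, ← hG]
      _ = G * B * G * B * G := by simp only [Matrix.mul_assoc]
    have e2 : (M * (B * G))ᵀ * M = G * B * G := by
      calc (M * (B * G))ᵀ * M = Gᵀ * Bᵀ * (Mᵀ * M) := by
            simp only [transpose_mul, Matrix.mul_assoc]
      _ = G * B * G := by rw [hGt, hBs, ← hG]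
    have e3 : Mᵀ * (M * (B * G)) = G * (B * G) := by rw [← Matrix.mul_assoc, ← hG]
    have e4 : G * B * G * B * G = G * B * G := by
      calc G * B * G * B * G = G * (B * G * B) * G := by simp only [Matrix.mul_assoc]
      _ = G * B * G := by rw [b2]
    calc (M * (B * G) - M)ᵀ * (M * (B * G) - M)
        = (M * (B * G))ᵀ * (M * (B * G)) - (M * (B * G))ᵀ * M
            - (Mᵀ * (M * (B * G)) - Mᵀ * M) := by
          simp only [transpose_sub, Matrix.sub_mul, Matrix.mul_sub]; abel
    _ = G * B * G * B * G - G * B * G - (G * (B * G) - G) := by rw [e1, e2, e3, hG]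
    _ = 0 := by rw [e4, b1, ← Matrix.mul_assoc, b1]; simp
  have h0 := tmul_self_zero key
  have : M * (B * G) = M := by
    have := sub_eq_zero.mp h0
    exact this
  exact this

end aux

section dot
variable {a b : Type*} [Fintype a] [Fintype b]

lemma dot_self_nonneg (v : a → ℝ) : 0 ≤ v ⬝ᵥ v :=
  Finset.sum_nonneg fun i _ => mul_self_nonneg _

lemma dot_mulVec (M : Matrix a b ℝ) (v : a → ℝ) (w : b → ℝ) :
    v ⬝ᵥ (M *ᵥ w) = (Mᵀ *ᵥ v) ⬝ᵥ w := by
  rw [Matrix.dotProduct_mulVec]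
  congr 1
  rw [← transpose_transpose M, Matrix.vecMul_transpose, transpose_transpose]

lemma mulVec_dot (M : Matrix a b ℝ) (w : b → ℝ) (v : a → ℝ) :
    (M *ᵥ w) ⬝ᵥ v = w ⬝ᵥ (Mᵀ *ᵥ v) := by
  rw [dotProduct_comm, dot_mulVec, dotProduct_comm]

/-- Pythagoras: the pseudoinverse projection is the closest point in the column span. -/
lemma proj_opt {M : Matrix a b ℝ} {B : Matrix b b ℝ}
    (hB : IsMoorePenrose (Mᵀ * M) B) (z : a → ℝ) (u : b → ℝ) :
    (z - M *ᵥ (B *ᵥ (Mᵀ *ᵥ z))) ⬝ᵥ (z - M *ᵥ (B *ᵥ (Mᵀ *ᵥ z)))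
      ≤ (z - M *ᵥ u) ⬝ᵥ (z - M *ᵥ u) := by
  classical
  have hGt : (Mᵀ * M)ᵀ = Mᵀ * M := by simp [transpose_mul]
  have hBs : Bᵀ = B := mp_symm hGt hB
  have hMP : M * (B * (Mᵀ * M)) = M := mul_pinv_tmul hB
  set q : a → ℝ := z - M *ᵥ (B *ᵥ (Mᵀ *ᵥ z)) with hq
  set w : b → ℝ := B *ᵥ (Mᵀ *ᵥ z) - u with hw
  have hzero : Mᵀ *ᵥ q = 0 := by
    have h1 : Mᵀ * (M * (B * Mᵀ)) = Mᵀ := by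
      have := congrArg transpose hMP
      simpa only [transpose_mul, hBs, hGt, Matrix.mul_assoc] using this
    have : Mᵀ *ᵥ (M *ᵥ (B *ᵥ (Mᵀ *ᵥ z))) = Mᵀ *ᵥ z := by
      simp only [Matrix.mulVec_mulVec, ← Matrix.mul_assoc]
      rw [show Mᵀ * M * B * Mᵀ = Mᵀ * (M * (B * Mᵀ)) by simp only [Matrix.mul_assoc], h1]
    rw [hq, Matrix.mulVec_sub, this, sub_self]
  have hdecomp : z - M *ᵥ u = q + M *ᵥ w := by
    rw [hq, hw, Matrix.mulVec_sub]; abel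
  have hcross : q ⬝ᵥ (M *ᵥ w) = 0 := by
    rw [dot_mulVec, hzero, zero_dotProduct]
  rw [hdecomp]
  have expand : (q + M *ᵥ w) ⬝ᵥ (q + M *ᵥ w)
      = q ⬝ᵥ q + 2 * (q ⬝ᵥ (M *ᵥ w)) + (M *ᵥ w) ⬝ᵥ (M *ᵥ w) := by
    simp only [add_dotProduct, dotProduct_add]
    rw [dotProduct_comm (M *ᵥ w) q]; ring
  rw [expand, hcross]
  have := dot_self_nonneg (M *ᵥ w)
  linarith

end dot

section spectral
variable {m n : ℕ} (Ao : Matrix (Fin m) (Fin n) ℝ)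

lemma hermN : (Aoᵀ * Ao).IsHermitian := by
  unfold Matrix.IsHermitian
  rw [conjTranspose_eq_transpose_of_trivial, transpose_mul, transpose_transpose]

lemma quad_eq (v : Fin n → ℝ) :
    v ⬝ᵥ ((Aoᵀ * Ao) *ᵥ v) = (Ao *ᵥ v) ⬝ᵥ (Ao *ᵥ v) := by
  rw [← Matrix.mulVec_mulVec, dot_mulVec, transpose_transpose]

lemma mem_eig_nonneg {μ : ℝ}
    (h : μ ∈ {μ : ℝ | μ ≠ 0 ∧ ∃ v : Fin n → ℝ, v ≠ 0 ∧ (Aoᵀ * Ao) *ᵥ v = μ • v}) : 0 ≤ μ := by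
  obtain ⟨hμ, v, hv, heq⟩ := h
  have h1 := quad_eq Ao v
  rw [heq] at h1
  have h2 : v ⬝ᵥ (μ • v) = μ * (v ⬝ᵥ v) := by
    simp [dotProduct_smul]
  have hvv : 0 < v ⬝ᵥ v := by
    rcases lt_or_eq_of_le (dot_self_nonneg v) with h | h
    · exact h
    · exact absurd (dotProduct_self_eq_zero.mp h.symm) hv
  nlinarith [dot_self_nonneg (Ao *ᵥ v)]

lemma lamMinPos_nonneg : 0 ≤ lamMinPos (Aoᵀ * Ao) :=
  Real.sInf_nonneg fun _ hx => mem_eig_nonneg Ao hx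

lemma eigSet_bdd : BddBelow {μ : ℝ | μ ≠ 0 ∧ ∃ v : Fin n → ℝ, v ≠ 0 ∧ (Aoᵀ * Ao) *ᵥ v = μ • v} :=
  ⟨0, fun _ hx => mem_eig_nonneg Ao hx⟩

lemma lamMinPos_le_eig {i : Fin n} (hi : (hermN Ao).eigenvalues i ≠ 0) :
    lamMinPos (Aoᵀ * Ao) ≤ (hermN Ao).eigenvalues i := by
  apply csInf_le (eigSet_bdd Ao)
  refine ⟨hi, ⇑((hermN Ao).eigenvectorBasis i), ?_, (hermN Ao).mulVec_eigenvectorBasis i⟩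
  intro h0
  have hnorm := (hermN Ao).eigenvectorBasis.orthonormal.1 i
  rw [show (hermN Ao).eigenvectorBasis i = 0 by ext j; exact congrFun h0 j] at hnorm
  simp at hnorm

lemma eig_nonneg (i : Fin n) : 0 ≤ (hermN Ao).eigenvalues i := by
  by_cases hi : (hermN Ao).eigenvalues i = 0
  · rw [hi]
  · apply mem_eig_nonneg Ao (μ := (hermN Ao).eigenvalues i)
    refine ⟨hi, ⇑((hermN Ao).eigenvectorBasis i), ?_, (hermN Ao).mulVec_eigenvectorBasis i⟩
    intro h0
    have hnorm := (hermN Ao).eigenvectorBasis.orthonormal.1 i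
    rw [show (hermN Ao).eigenvectorBasis i = 0 by ext j; exact congrFun h0 j] at hnorm
    simp at hnorm

lemma spectral_decomp :
    Aoᵀ * Ao = ((hermN Ao).eigenvectorUnitary : Matrix (Fin n) (Fin n) ℝ)
      * diagonal ((hermN Ao).eigenvalues)
      * ((hermN Ao).eigenvectorUnitary : Matrix (Fin n) (Fin n) ℝ)ᵀ := by
  have := (hermN Ao).spectral_theorem
  simpa [Matrix.star_eq_conjTranspose, conjTranspose_eq_transpose_of_trivial] using this

lemma UtU : ((hermN Ao).eigenvectorUnitary : Matrix (Fin n) (Fin n) ℝ)ᵀ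
    * ((hermN Ao).eigenvectorUnitary : Matrix (Fin n) (Fin n) ℝ) = 1 := by
  have := Unitary.coe_star_mul_self ((hermN Ao).eigenvectorUnitary)
  simpa [Matrix.star_eq_conjTranspose, conjTranspose_eq_transpose_of_trivial] using this

lemma trace_eq_frob : ∑ i, (hermN Ao).eigenvalues i = frobSq Ao := by
  have h1 : (Aoᵀ * Ao).trace = frobSq Ao := by
    simp only [Matrix.trace, Matrix.diag, Matrix.mul_apply, frobSq, transpose_apply, sq]
    rw [Finset.sum_comm]
  rw [← h1]
  conv_rhs => rw [spectral_decomp Ao]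
  rw [Matrix.trace_mul_cycle, UtU Ao, Matrix.one_mul, trace_diagonal]

lemma lamMinPos_le_frob (hF : 0 < frobSq Ao) : lamMinPos (Aoᵀ * Ao) ≤ frobSq Ao := by
  have hne : ∃ i, (hermN Ao).eigenvalues i ≠ 0 := by
    by_contra hall
    push_neg at hall
    have : ∑ i, (hermN Ao).eigenvalues i = 0 := Finset.sum_eq_zero fun i _ => hall i
    rw [trace_eq_frob Ao] at this
    linarith
  obtain ⟨i, hi⟩ := hne
  refine le_trans (lamMinPos_le_eig Ao hi) ?_
  calc (hermN Ao).eigenvalues i ≤ ∑ j, (hermN Ao).eigenvalues j :=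
        Finset.single_le_sum (fun j _ => eig_nonneg Ao j) (Finset.mem_univ i)
  _ = frobSq Ao := trace_eq_frob Ao

lemma diag_quad1 (U : Matrix (Fin n) (Fin n) ℝ) (lam w : Fin n → ℝ) :
    w ⬝ᵥ ((U * diagonal lam * Uᵀ) *ᵥ w) = ∑ i, lam i * ((Uᵀ *ᵥ w) i)^2 := by
  rw [show (U * diagonal lam * Uᵀ) *ᵥ w = U *ᵥ (diagonal lam *ᵥ (Uᵀ *ᵥ w)) by
    simp only [Matrix.mulVec_mulVec, Matrix.mul_assoc]]
  rw [dot_mulVec]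
  simp only [Matrix.mulVec_diagonal, dotProduct]
  exact Finset.sum_congr rfl fun i _ => by ring

lemma diag_quad2 (U : Matrix (Fin n) (Fin n) ℝ) (hU : Uᵀ * U = 1) (lam w : Fin n → ℝ) :
    ((U * diagonal lam * Uᵀ) *ᵥ w) ⬝ᵥ ((U * diagonal lam * Uᵀ) *ᵥ w)
      = ∑ i, (lam i)^2 * ((Uᵀ *ᵥ w) i)^2 := by
  rw [show (U * diagonal lam * Uᵀ) *ᵥ w = U *ᵥ (diagonal lam *ᵥ (Uᵀ *ᵥ w)) by
    simp only [Matrix.mulVec_mulVec, Matrix.mul_assoc]]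
  rw [mulVec_dot U (diagonal lam *ᵥ (Uᵀ *ᵥ w)) (U *ᵥ (diagonal lam *ᵥ (Uᵀ *ᵥ w))),
    Matrix.mulVec_mulVec (M := Uᵀ) (N := U), hU, Matrix.one_mulVec]
  simp only [Matrix.mulVec_diagonal, dotProduct]
  exact Finset.sum_congr rfl fun i _ => by ring

/-- Key spectral inequality on the range of `Ao`. -/
lemma spectral_key (w : Fin n → ℝ) :
    lamMinPos (Aoᵀ * Ao) * ((Ao *ᵥ w) ⬝ᵥ (Ao *ᵥ w))
      ≤ ((Aoᵀ * Ao) *ᵥ w) ⬝ᵥ ((Aoᵀ * Ao) *ᵥ w) := by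
  classical
  have h1 : (Ao *ᵥ w) ⬝ᵥ (Ao *ᵥ w)
      = ∑ i, (hermN Ao).eigenvalues i * ((((hermN Ao).eigenvectorUnitary :
          Matrix (Fin n) (Fin n) ℝ)ᵀ *ᵥ w) i)^2 := by
    rw [← quad_eq]
    conv_lhs => rw [spectral_decomp Ao]
    exact diag_quad1 _ _ w
  have h2 : ((Aoᵀ * Ao) *ᵥ w) ⬝ᵥ ((Aoᵀ * Ao) *ᵥ w)
      = ∑ i, ((hermN Ao).eigenvalues i)^2 * ((((hermN Ao).eigenvectorUnitary :
          Matrix (Fin n) (Fin n) ℝ)ᵀ *ᵥ w) i)^2 := by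
    conv_lhs => rw [spectral_decomp Ao]
    exact diag_quad2 _ (UtU Ao) _ w
  rw [h1, h2, Finset.mul_sum]
  apply Finset.sum_le_sum
  intro i _
  set ci := ((((hermN Ao).eigenvectorUnitary : Matrix (Fin n) (Fin n) ℝ)ᵀ *ᵥ w) i)
  by_cases hi : (hermN Ao).eigenvalues i = 0
  · simp [hi]
  · have hle := lamMinPos_le_eig Ao hi
    have h0 := eig_nonneg Ao i
    have hkey : 0 ≤ (hermN Ao).eigenvalues i
        * (((hermN Ao).eigenvalues i - lamMinPos (Aoᵀ * Ao)) * ci^2) :=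
      mul_nonneg h0 (mul_nonneg (sub_nonneg.mpr hle) (sq_nonneg _))
    nlinarith [hkey]

end spectral


section more
variable {a b c d e : Type*} [Fintype a] [Fintype b] [Fintype c]

lemma mul_submatrix_right (M : Matrix a b ℝ) (N : Matrix b c ℝ) (g : d → c) :
    (M * N).submatrix id g = M * N.submatrix id g := by
  ext i j; simp [Matrix.mul_apply]

lemma dot_add_smul (r v : a → ℝ) (t : ℝ) :
    (r + t • v) ⬝ᵥ (r + t • v) = r ⬝ᵥ r + ((v ⬝ᵥ v) * t^2 + 2 * (v ⬝ᵥ r) * t) := by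
  simp only [add_dotProduct, dotProduct_add, smul_dotProduct,
    dotProduct_smul, smul_eq_mul]
  rw [dotProduct_comm r v]; ring

lemma tmulVec_comp [DecidableEq b] (M : Matrix a b ℝ) (v : a → ℝ) (j : b) :
    (Mᵀ *ᵥ v) j = (M *ᵥ Pi.single j 1) ⬝ᵥ v := by
  simp [Matrix.mulVec, dotProduct, transpose_apply, Pi.single_apply, Finset.mul_sum]

lemma mul_indicator [DecidableEq b] (M : Matrix a b ℝ) (f : d → b) :
    M * (Matrix.of fun i t => if i = f t then (1:ℝ) else 0) = M.submatrix id f := by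
  ext i j
  simp [Matrix.mul_apply]

end more

/-- One single-column projection step. -/
noncomputable def colStep {m n : ℕ} (Ao : Matrix (Fin m) (Fin n) ℝ) (j : Fin n)
    (v : Fin m → ℝ) : Fin m → ℝ :=
  v - (((fun i => Ao i j) ⬝ᵥ v) / ((fun i => Ao i j) ⬝ᵥ (fun i => Ao i j))) • (fun i => Ao i j)

section colstep
variable {m n : ℕ} (Ao : Matrix (Fin m) (Fin n) ℝ)

lemma colStep_range (j : Fin n) (w : Fin n → ℝ) :
    ∃ w', colStep Ao j (Ao *ᵥ w) = Ao *ᵥ w' := by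
  classical
  refine ⟨w - (((fun i => Ao i j) ⬝ᵥ (Ao *ᵥ w)) /
      ((fun i => Ao i j) ⬝ᵥ (fun i => Ao i j))) • (Pi.single j 1 : Fin n → ℝ), ?_⟩
  rw [Matrix.mulVec_sub, Matrix.mulVec_smul]
  unfold colStep
  congr 2
  funext i
  simp [Matrix.mulVec_single]

lemma colStep_sq (j : Fin n) (v : Fin m → ℝ) :
    (colStep Ao j v) ⬝ᵥ (colStep Ao j v)
      = v ⬝ᵥ v - ((fun i => Ao i j) ⬝ᵥ v)^2 / ((fun i => Ao i j) ⬝ᵥ (fun i => Ao i j)) := by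
  have expand : ∀ (a : Fin m → ℝ) (c : ℝ),
      (v - c • a) ⬝ᵥ (v - c • a) = v ⬝ᵥ v - 2*c*(a ⬝ᵥ v) + c^2 * (a ⬝ᵥ a) := by
    intro a c
    simp only [sub_dotProduct, dotProduct_sub, smul_dotProduct,
      dotProduct_smul, smul_eq_mul]
    rw [dotProduct_comm a v]; ring
  unfold colStep
  rw [expand]
  set a : Fin m → ℝ := fun i => Ao i j with ha
  by_cases h0 : a ⬝ᵥ a = 0
  · have haz : a = 0 := dotProduct_self_eq_zero.mp h0
    have hav : a ⬝ᵥ v = 0 := by rw [haz]; simp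
    rw [h0, hav]; simp
  · field_simp
    ring

lemma colStep_exp (hAoF : 0 < frobSq Ao) (p : Fin n → ℝ)
    (hp : ∀ j, p j = (∑ i, (Ao i j) ^ 2) / frobSq Ao) (w : Fin n → ℝ) :
    ∑ j, p j * ((colStep Ao j (Ao *ᵥ w)) ⬝ᵥ (colStep Ao j (Ao *ᵥ w)))
      ≤ (1 - lamMinPos (Aoᵀ * Ao) / frobSq Ao) * ((Ao *ᵥ w) ⬝ᵥ (Ao *ᵥ w)) := by
  set v := Ao *ᵥ w with hv
  have haj : ∀ j, (fun i => Ao i j) ⬝ᵥ (fun i => Ao i j) = ∑ i, (Ao i j)^2 := by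
    intro j; simp [dotProduct, sq]
  have hpsum : ∑ j, p j = 1 := by
    have h1 : ∑ j, p j = (∑ j, ∑ i, (Ao i j)^2) / frobSq Ao := by
      rw [Finset.sum_div]; exact Finset.sum_congr rfl fun j _ => hp j
    have h2 : ∑ j : Fin n, ∑ i, (Ao i j)^2 = frobSq Ao := by
      unfold frobSq; exact Finset.sum_comm
    rw [h1, h2, div_self (ne_of_gt hAoF)]
  have key : ∀ j, p j * ((colStep Ao j v) ⬝ᵥ (colStep Ao j v))
      = p j * (v ⬝ᵥ v) - ((fun i => Ao i j) ⬝ᵥ v)^2 / frobSq Ao := by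
    intro j
    rw [colStep_sq, mul_sub]
    congr 1
    rw [hp j, ← haj j]
    by_cases h0 : (fun i => Ao i j) ⬝ᵥ (fun i => Ao i j) = 0
    · have haz : (fun i => Ao i j) = (0 : Fin m → ℝ) := dotProduct_self_eq_zero.mp h0
      rw [h0, show (fun i => Ao i j) ⬝ᵥ v = 0 by rw [haz]; simp]
      simp
    · field_simp
  have hAv : ∑ j, ((fun i => Ao i j) ⬝ᵥ v)^2 = (Aoᵀ *ᵥ v) ⬝ᵥ (Aoᵀ *ᵥ v) := by
    simp only [Matrix.mulVec, dotProduct, transpose_apply, sq]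
  have hsum : ∑ j, p j * ((colStep Ao j v) ⬝ᵥ (colStep Ao j v))
      = v ⬝ᵥ v - ((Aoᵀ *ᵥ v) ⬝ᵥ (Aoᵀ *ᵥ v)) / frobSq Ao := by
    rw [Finset.sum_congr rfl fun j _ => key j, Finset.sum_sub_distrib, ← Finset.sum_mul,
      hpsum, one_mul, ← Finset.sum_div, hAv]
  rw [hsum]
  have hspec : lamMinPos (Aoᵀ * Ao) * (v ⬝ᵥ v) ≤ (Aoᵀ *ᵥ v) ⬝ᵥ (Aoᵀ *ᵥ v) := by
    have h := spectral_key Ao w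
    rw [hv, Matrix.mulVec_mulVec]
    exact h
  have hdiv : lamMinPos (Aoᵀ * Ao) * (v ⬝ᵥ v) / frobSq Ao
      ≤ ((Aoᵀ *ᵥ v) ⬝ᵥ (Aoᵀ *ᵥ v)) / frobSq Ao := by gcongr
  have hexp : (1 - lamMinPos (Aoᵀ * Ao) / frobSq Ao) * (v ⬝ᵥ v)
      = v ⬝ᵥ v - lamMinPos (Aoᵀ * Ao) * (v ⬝ᵥ v) / frobSq Ao := by ring
  rw [hexp]
  linarith [hdiv]

end colstep

section lemB
variable {m n : ℕ} (Ao : Matrix (Fin m) (Fin n) ℝ)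

lemma trajCol_range (z : Fin m → ℝ) (w : Fin n → ℝ) (hz : z = Ao *ᵥ w) :
    ∀ (s : ℕ) (ω : Fin s → Fin n), ∃ w', traj (colStep Ao) z s ω = Ao *ᵥ w' := by
  intro s
  induction s with
  | zero => exact fun ω => ⟨w, hz⟩
  | succ s ih =>
    intro ω
    obtain ⟨w', hw'⟩ := ih (Fin.init ω)
    show ∃ w'', colStep Ao (ω (Fin.last s)) (traj (colStep Ao) z s (Fin.init ω)) = Ao *ᵥ w''
    rw [hw']
    exact colStep_range Ao _ w'

lemma traj_colStep_rep (z : Fin m → ℝ) :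
    ∀ (s : ℕ) (ω : Fin s → Fin n), ∃ c : Fin s → ℝ,
      traj (colStep Ao) z s ω = z - (Ao.submatrix id ω) *ᵥ c := by
  intro s
  induction s with
  | zero =>
    intro ω
    refine ⟨0, ?_⟩
    rw [Matrix.mulVec_zero]
    simp [traj]
  | succ s ih =>
    intro ω
    obtain ⟨c, hc⟩ := ih (Fin.init ω)
    refine ⟨Fin.snoc c (((fun i => Ao i (ω (Fin.last s))) ⬝ᵥ (traj (colStep Ao) z s (Fin.init ω))) /
      ((fun i => Ao i (ω (Fin.last s))) ⬝ᵥ (fun i => Ao i (ω (Fin.last s))))), ?_⟩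
    show colStep Ao (ω (Fin.last s)) (traj (colStep Ao) z s (Fin.init ω)) = _
    rw [show ∀ (j : Fin n) (v : Fin m → ℝ), colStep Ao j v
      = v - (((fun i => Ao i j) ⬝ᵥ v) / ((fun i => Ao i j) ⬝ᵥ (fun i => Ao i j))) • (fun i => Ao i j)
      from fun _ _ => rfl, hc]
    funext i
    simp only [Pi.sub_apply, Pi.smul_apply, smul_eq_mul]
    have hmv : ∀ (c' : Fin (s+1) → ℝ), ((Ao.submatrix id ω) *ᵥ c') i
        = ∑ t : Fin (s+1), Ao i (ω t) * c' t := by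
      intro c'; simp [Matrix.mulVec, dotProduct]
    rw [hmv, Fin.sum_univ_castSucc]
    have h1 : ∀ t : Fin s, ω t.castSucc = Fin.init ω t := fun t => rfl
    have h2 : ((Ao.submatrix id (Fin.init ω)) *ᵥ c) i = ∑ t : Fin s, Ao i (Fin.init ω t) * c t := by
      simp [Matrix.mulVec, dotProduct]
    simp only [Fin.snoc_castSucc, Fin.snoc_last, h1]
    rw [h2]
    ring

lemma sum_snoc_peel {I : Type*} [Fintype I] {s : ℕ} (f : (Fin (s+1) → I) → ℝ) :
    (∑ ω : Fin (s+1) → I, f ω) = ∑ x : I, ∑ g : Fin s → I, f (Fin.snoc g x) := by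
  rw [← Equiv.sum_comp (Fin.snocEquiv (fun _ => I)) f, Fintype.sum_prod_type]
  rfl

lemma lemB (hAoF : 0 < frobSq Ao) (p : Fin n → ℝ)
    (hp : ∀ j, p j = (∑ i, (Ao i j) ^ 2) / frobSq Ao)
    (z : Fin m → ℝ) (w : Fin n → ℝ) (hz : z = Ao *ᵥ w) (s : ℕ) :
    ∑ ω : Fin s → Fin n, (∏ t, p (ω t)) *
        ((traj (colStep Ao) z s ω) ⬝ᵥ (traj (colStep Ao) z s ω))
      ≤ (1 - lamMinPos (Aoᵀ * Ao) / frobSq Ao) ^ s * (z ⬝ᵥ z) := by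
  have hpnn : ∀ j, 0 ≤ p j := by
    intro j; rw [hp j]
    apply div_nonneg (Finset.sum_nonneg fun i _ => sq_nonneg _) (le_of_lt hAoF)
  have hrho : 0 ≤ 1 - lamMinPos (Aoᵀ * Ao) / frobSq Ao := by
    have h1 : lamMinPos (Aoᵀ * Ao) / frobSq Ao ≤ 1 :=
      (div_le_one hAoF).mpr (lamMinPos_le_frob Ao hAoF)
    linarith
  induction s with
  | zero =>
    simp [traj]
  | succ s ih =>
    rw [sum_snoc_peel]
    have hterm : ∀ (x : Fin n) (g : Fin s → Fin n),
        (∏ t, p ((Fin.snoc g x : Fin (s+1) → Fin n) t)) * ((traj (colStep Ao) z (s+1) (Fin.snoc g x)) ⬝ᵥ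
          (traj (colStep Ao) z (s+1) (Fin.snoc g x)))
        = (∏ t, p (g t)) * (p x * ((colStep Ao x (traj (colStep Ao) z s g)) ⬝ᵥ
            (colStep Ao x (traj (colStep Ao) z s g)))) := by
      intro x g
      have e1 : (∏ t, p ((Fin.snoc g x : Fin (s+1) → Fin n) t)) = (∏ t, p (g t)) * p x := by
        calc ∏ t, p ((Fin.snoc g x : Fin (s+1) → Fin n) t) = ∏ t, (Fin.snoc (p ∘ g) (p x) : Fin (s+1) → ℝ) t := by
              rw [← Fin.comp_snoc]; rfl
        _ = (∏ t, (p ∘ g) t) * p x := Fin.prod_snoc _ _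
        _ = (∏ t, p (g t)) * p x := rfl
      have e2 : traj (colStep Ao) z (s+1) (Fin.snoc g x)
          = colStep Ao x (traj (colStep Ao) z s g) := by
        have h1 : (Fin.snoc g x : Fin (s+1) → Fin n) (Fin.last s) = x := by simp
        have h2 : Fin.init (Fin.snoc g x : Fin (s+1) → Fin n) = g := by simp
        show colStep Ao ((Fin.snoc g x : Fin (s+1) → Fin n) (Fin.last s))
          (traj (colStep Ao) z s (Fin.init (Fin.snoc g x : Fin (s+1) → Fin n))) = _
        rw [h1, h2]
      rw [e1, e2]; ring
    calc ∑ x : Fin n, ∑ g : Fin s → Fin n, (∏ t, p ((Fin.snoc g x : Fin (s+1) → Fin n) t)) *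
          ((traj (colStep Ao) z (s+1) (Fin.snoc g x)) ⬝ᵥ (traj (colStep Ao) z (s+1) (Fin.snoc g x)))
        = ∑ g : Fin s → Fin n, ∑ x : Fin n, (∏ t, p (g t)) *
            (p x * ((colStep Ao x (traj (colStep Ao) z s g)) ⬝ᵥ
              (colStep Ao x (traj (colStep Ao) z s g)))) := by
          rw [Finset.sum_comm]
          exact Finset.sum_congr rfl fun g _ => Finset.sum_congr rfl fun x _ => hterm x g
    _ = ∑ g : Fin s → Fin n, (∏ t, p (g t)) *
          (∑ x : Fin n, p x * ((colStep Ao x (traj (colStep Ao) z s g)) ⬝ᵥ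
            (colStep Ao x (traj (colStep Ao) z s g)))) := by
          exact Finset.sum_congr rfl fun g _ => (Finset.mul_sum _ _ _).symm
    _ ≤ ∑ g : Fin s → Fin n, (∏ t, p (g t)) *
          ((1 - lamMinPos (Aoᵀ * Ao) / frobSq Ao) *
            ((traj (colStep Ao) z s g) ⬝ᵥ (traj (colStep Ao) z s g))) := by
          apply Finset.sum_le_sum
          intro g _
          apply mul_le_mul_of_nonneg_left _ (Finset.prod_nonneg fun t _ => hpnn _)
          obtain ⟨w', hw'⟩ := trajCol_range Ao z w hz s g
          rw [hw']
          exact colStep_exp Ao hAoF p hp w'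
    _ = (1 - lamMinPos (Aoᵀ * Ao) / frobSq Ao) * ∑ g : Fin s → Fin n, (∏ t, p (g t)) *
          ((traj (colStep Ao) z s g) ⬝ᵥ (traj (colStep Ao) z s g)) := by
          rw [Finset.mul_sum]
          exact Finset.sum_congr rfl fun g _ => by ring
    _ ≤ (1 - lamMinPos (Aoᵀ * Ao) / frobSq Ao) *
          ((1 - lamMinPos (Aoᵀ * Ao) / frobSq Ao) ^ s * (z ⬝ᵥ z)) :=
          mul_le_mul_of_nonneg_left ih hrho
    _ = (1 - lamMinPos (Aoᵀ * Ao) / frobSq Ao) ^ (s+1) * (z ⬝ᵥ z) := by ring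

end lemB


/-- least-squares SC-RCD convergence. With `Π` the orthogonal
projector onto `range(A_{:,S})`, `A° = A − Π A` with `‖A°‖_F > 0`, and blocks of `ℓ`
columns sampled i.i.d. with probabilities `‖A°_{:,j}‖₂²/‖A°‖_F²`, the least-squares
SC-RCD iterates satisfy
`E‖x^k − x*‖_{AᵀA}² ≤ (1 − σmin⁺(A°)²/‖A°‖_F²)^{kℓ} ‖x^0 − x*‖_{AᵀA}²`, where
`σmin⁺(A°)² = λmin⁺((A°)ᵀA°)` and `‖z‖_{AᵀA}² = (Az)⬝(Az)`. -/
theorem stmt_19 {m n l : ℕ}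
    (A : Matrix (Fin m) (Fin n) ℝ) (b : Fin m → ℝ)
    -- `x*` is any minimizer of `‖Ax − b‖₂`
    (xstar : Fin n → ℝ)
    (hxstar : ∀ y : Fin n → ℝ,
      (A *ᵥ xstar - b) ⬝ᵥ (A *ᵥ xstar - b) ≤ (A *ᵥ y - b) ⬝ᵥ (A *ᵥ y - b))
    (S : Finset (Fin n))
    -- `Pi` is the orthogonal projector onto the span of the columns of `A` indexed by `S`
    (Pi : Matrix (Fin m) (Fin m) ℝ)
    (hPi_idem : Pi * Pi = Pi) (hPi_symm : Piᵀ = Pi)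
    (hPi_range : ∀ v : Fin m → ℝ, ∃ c : {j // j ∈ S} → ℝ,
      Pi *ᵥ v = A.submatrix id (fun j : {j // j ∈ S} => (j : Fin n)) *ᵥ c)
    (hPi_fix : ∀ c : {j // j ∈ S} → ℝ,
      Pi *ᵥ (A.submatrix id (fun j : {j // j ∈ S} => (j : Fin n)) *ᵥ c) =
        A.submatrix id (fun j : {j // j ∈ S} => (j : Fin n)) *ᵥ c)
    -- the column projection residual `A° = A − Π A`, with `‖A°‖_F > 0`
    (Ao : Matrix (Fin m) (Fin n) ℝ) (hAo : Ao = A - Pi * A)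
    (hAoF : 0 < frobSq Ao)
    -- `W = ((AᵀA)_{S,S})†` and the auxiliary matrix `C = ((AᵀA)_{S,S})† (AᵀA)_{S,:}`
    (W : Matrix {j // j ∈ S} {j // j ∈ S} ℝ)
    (hW : IsMoorePenrose ((Aᵀ * A).submatrix (fun j : {j // j ∈ S} => (j : Fin n))
      (fun j : {j // j ∈ S} => (j : Fin n))) W)
    (C : Matrix {j // j ∈ S} (Fin n) ℝ)
    (hC : C = W * (Aᵀ * A).submatrix (fun j : {j // j ∈ S} => (j : Fin n)) id)
    -- `pJ J = (((A°)ᵀA°)_{J,J})†` for a block `J` of `ℓ` columns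
    (pJ : (Fin l → Fin n) → Matrix (Fin l) (Fin l) ℝ)
    (hpJ : ∀ J : Fin l → Fin n, IsMoorePenrose ((Aoᵀ * Ao).submatrix J J) (pJ J))
    -- coordinate selection matrices `e_S` and `e_J`
    (eS : Matrix (Fin n) {j // j ∈ S} ℝ)
    (heS : eS = Matrix.of fun i j => if i = j.val then 1 else 0)
    (eJ : (Fin l → Fin n) → Matrix (Fin n) (Fin l) ℝ)
    (heJ : ∀ J, eJ J = Matrix.of fun i t => if i = J t then 1 else 0)
    -- the least-squares SC-RCD update: `x^{k+1} = x^k − e_J α + e_S β` with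
    -- `α = (((A°)ᵀA°)_{J,J})† (A°_{:,J})ᵀ r`, `β = C_{:,J} α`, and `r = A x^k − b`
    (step : (Fin l → Fin n) → (Fin n → ℝ) → (Fin n → ℝ))
    (hstep : ∀ (J : Fin l → Fin n) (x : Fin n → ℝ),
      step J x = x - eJ J *ᵥ (pJ J *ᵥ ((Ao.submatrix id J)ᵀ *ᵥ (A *ᵥ x - b)))
        + eS *ᵥ (C.submatrix id J *ᵥ
            (pJ J *ᵥ ((Ao.submatrix id J)ᵀ *ᵥ (A *ᵥ x - b)))))
    -- `x0` satisfies `(A_{:,S})ᵀ (A x0 − b) = 0`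
    (x0 : Fin n → ℝ)
    (hx0 : (A.submatrix id (fun j : {j // j ∈ S} => (j : Fin n)))ᵀ *ᵥ
      (A *ᵥ x0 - b) = 0)
    -- the column sampling probabilities `‖A°_{:,j}‖₂²/‖A°‖_F²`
    (p : Fin n → ℝ) (hp : ∀ j, p j = (∑ i, (Ao i j) ^ 2) / frobSq Ao) :
    ∀ k : ℕ,
      ∑ ω : Fin k → (Fin l → Fin n), (∏ i, ∏ t, p (ω i t)) *
          ((A *ᵥ (traj step x0 k ω - xstar)) ⬝ᵥ (A *ᵥ (traj step x0 k ω - xstar))) ≤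
        (1 - lamMinPos (Aoᵀ * Ao) / frobSq Ao) ^ (k * l) *
          ((A *ᵥ (x0 - xstar)) ⬝ᵥ (A *ᵥ (x0 - xstar))) := by
  classical
  have hpnn : ∀ j, 0 ≤ p j := fun j => by
    rw [hp j]; exact div_nonneg (Finset.sum_nonneg fun i _ => sq_nonneg _) hAoF.le
  have hrho : 0 ≤ 1 - lamMinPos (Aoᵀ * Ao) / frobSq Ao := by
    have h1 : lamMinPos (Aoᵀ * Ao) / frobSq Ao ≤ 1 :=
      (div_le_one hAoF).mpr (lamMinPos_le_frob Ao hAoF)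
    linarith
  set inc : {j // j ∈ S} → Fin n := fun j => (j : Fin n) with hinc
  set AS := A.submatrix id inc with hASdef
  -- selection matrix identities
  have hAes : A * eS = AS := by rw [heS]; exact mul_indicator A inc
  have hAeJ : ∀ J : Fin l → Fin n, A * eJ J = A.submatrix id J := fun J => by
    rw [heJ J]; exact mul_indicator A J
  have hAoeJ : ∀ J : Fin l → Fin n, Ao * eJ J = Ao.submatrix id J := fun J => by
    rw [heJ J]; exact mul_indicator Ao J
  -- Gram matrix identities
  have hGS : (Aᵀ * A).submatrix inc inc = ASᵀ * AS := by
    ext i j; simp [Matrix.mul_apply, hASdef]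
  have hW' : IsMoorePenrose (ASᵀ * AS) W := by rw [← hGS]; exact hW
  have hGJ : ∀ J : Fin l → Fin n, (Aoᵀ * Ao).submatrix J J
      = (Ao.submatrix id J)ᵀ * (Ao.submatrix id J) := by
    intro J; ext i j; simp [Matrix.mul_apply]
  have hpJ' : ∀ J, IsMoorePenrose ((Ao.submatrix id J)ᵀ * (Ao.submatrix id J)) (pJ J) := by
    intro J; rw [← hGJ J]; exact hpJ J
  -- the projector identity Pi = AS W ASᵀ
  have hfix : Pi * AS = AS := by
    ext i j
    have h := congrFun (hPi_fix (_root_.Pi.single j 1)) i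
    rw [show AS *ᵥ _root_.Pi.single j 1 = fun i' => AS i' j from by
      funext i'; simp [Matrix.mulVec_single]] at h
    rw [Matrix.mul_apply]
    simpa [Matrix.mulVec, dotProduct] using h
  have hASP : ASᵀ * Pi = ASᵀ := by
    calc ASᵀ * Pi = ASᵀ * Piᵀ := by rw [hPi_symm]
    _ = (Pi * AS)ᵀ := by rw [transpose_mul]
    _ = ASᵀ := by rw [hfix]
  have hQ : ∀ v, AS *ᵥ (W *ᵥ (ASᵀ *ᵥ v)) = Pi *ᵥ v := by
    intro v
    obtain ⟨c, hcv⟩ := hPi_range v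
    have hv1 : ASᵀ *ᵥ v = ASᵀ *ᵥ (Pi *ᵥ v) := by
      rw [Matrix.mulVec_mulVec, hASP]
    calc AS *ᵥ (W *ᵥ (ASᵀ *ᵥ v)) = AS *ᵥ (W *ᵥ (ASᵀ *ᵥ (AS *ᵥ c))) := by rw [hv1, hcv]
    _ = (AS * (W * (ASᵀ * AS))) *ᵥ c := by simp only [Matrix.mulVec_mulVec, Matrix.mul_assoc]
    _ = AS *ᵥ c := by rw [mul_pinv_tmul hW']
    _ = Pi *ᵥ v := hcv.symm
  have hQM : AS * (W * ASᵀ) = Pi := by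
    ext i j
    have h := congrFun (hQ (_root_.Pi.single j 1)) i
    have hl : AS *ᵥ (W *ᵥ (ASᵀ *ᵥ (_root_.Pi.single j 1 : Fin m → ℝ)))
        = (AS * (W * ASᵀ)) *ᵥ (_root_.Pi.single j 1 : Fin m → ℝ) := by
      simp only [Matrix.mulVec_mulVec, Matrix.mul_assoc]
    rw [hl] at h
    simpa [Matrix.mulVec_single] using h
  -- normal equations
  have hmain : ∀ u : Fin n → ℝ, (A *ᵥ u) ⬝ᵥ (A *ᵥ xstar - b) = 0 := by
    intro u
    set d : ℝ := (A *ᵥ u) ⬝ᵥ (A *ᵥ u) with hd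
    set c : ℝ := (A *ᵥ u) ⬝ᵥ (A *ᵥ xstar - b) with hcdef
    have hq : ∀ t : ℝ, 0 ≤ d * t^2 + 2 * c * t := by
      intro t
      have h := hxstar (xstar + t • u)
      have hexp : A *ᵥ (xstar + t • u) - b = (A *ᵥ xstar - b) + t • (A *ᵥ u) := by
        rw [Matrix.mulVec_add, Matrix.mulVec_smul]; abel
      rw [hexp, dot_add_smul] at h
      linarith
    show c = 0
    by_contra hc0
    have hd0 : 0 ≤ d := dot_self_nonneg _
    have hd1 : (0:ℝ) < d + 1 := by linarith
    have h1 := hq (-(c / (d+1)))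
    have key : d * (-(c/(d+1)))^2 + 2*c*(-(c/(d+1)))
        = (d*c^2 - 2*c^2*(d+1))/((d+1)^2) := by
      field_simp
      ring
    rw [key, le_div_iff₀ (by positivity)] at h1
    have hcsq : 0 < c^2 := by positivity
    nlinarith [h1, hcsq, hd0, mul_nonneg hd0 (le_of_lt hcsq)]
  have hnormal : Aᵀ *ᵥ (A *ᵥ xstar - b) = 0 := by
    funext j
    rw [tmulVec_comp]
    exact hmain (_root_.Pi.single j 1)
  have hAS0 : ∀ v : Fin m → ℝ, Aᵀ *ᵥ v = 0 → ASᵀ *ᵥ v = 0 := by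
    intro v hv
    funext j
    have h := congrFun hv (inc j)
    rw [show (ASᵀ *ᵥ v) j = (Aᵀ *ᵥ v) (inc j) from by
      simp [Matrix.mulVec, dotProduct, hASdef]]
    simpa using h
  have hrstar0 : Pi *ᵥ (A *ᵥ xstar - b) = 0 := by
    rw [← hQ, hAS0 _ hnormal, Matrix.mulVec_zero, Matrix.mulVec_zero]
  have hAor : Aoᵀ *ᵥ (A *ᵥ xstar - b) = 0 := by
    rw [hAo, transpose_sub, Matrix.sub_mulVec, transpose_mul, hPi_symm, ← Matrix.mulVec_mulVec,
      hrstar0, Matrix.mulVec_zero, hnormal, sub_zero]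
  -- step recursion on residuals
  have hstepz : ∀ (J : Fin l → Fin n) (x : Fin n → ℝ),
      A *ᵥ (step J x - xstar) = A *ᵥ (x - xstar)
        - (Ao.submatrix id J) *ᵥ (pJ J *ᵥ ((Ao.submatrix id J)ᵀ *ᵥ (A *ᵥ (x - xstar)))) := by
    intro J x
    have hres : A *ᵥ x - b = A *ᵥ (x - xstar) + (A *ᵥ xstar - b) := by
      rw [Matrix.mulVec_sub]; abel
    have hMJr : (Ao.submatrix id J)ᵀ *ᵥ (A *ᵥ x - b)
        = (Ao.submatrix id J)ᵀ *ᵥ (A *ᵥ (x - xstar)) := by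
      rw [hres, Matrix.mulVec_add]
      have h0 : (Ao.submatrix id J)ᵀ *ᵥ (A *ᵥ xstar - b) = 0 := by
        funext t
        rw [show ((Ao.submatrix id J)ᵀ *ᵥ (A *ᵥ xstar - b)) t
            = (Aoᵀ *ᵥ (A *ᵥ xstar - b)) (J t) from by
          simp [Matrix.mulVec, dotProduct]]
        rw [hAor]; rfl
      rw [h0, add_zero]
    rw [hstep J x]
    set α := pJ J *ᵥ ((Ao.submatrix id J)ᵀ *ᵥ (A *ᵥ x - b)) with hα
    have harr : x - eJ J *ᵥ α + eS *ᵥ (C.submatrix id J *ᵥ α) - xstar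
        = (x - xstar) - eJ J *ᵥ α + eS *ᵥ (C.submatrix id J *ᵥ α) := by abel
    rw [harr, Matrix.mulVec_add, Matrix.mulVec_sub]
    have h1 : A *ᵥ (eJ J *ᵥ α) = (A.submatrix id J) *ᵥ α := by
      rw [Matrix.mulVec_mulVec, hAeJ J]
    have h2 : A *ᵥ (eS *ᵥ (C.submatrix id J *ᵥ α)) = (Pi * A.submatrix id J) *ᵥ α := by
      rw [Matrix.mulVec_mulVec, Matrix.mulVec_mulVec]
      congr 1
      rw [hAes, hC, mul_submatrix_right, Matrix.submatrix_submatrix]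
      have hcomp : (Aᵀ * A).submatrix (inc ∘ id) (id ∘ J) = ASᵀ * A.submatrix id J := by
        ext i j
        simp [Matrix.mul_apply, hASdef]
      rw [hcomp, show AS * (W * (ASᵀ * A.submatrix id J))
          = (AS * (W * ASᵀ)) * A.submatrix id J from by simp only [Matrix.mul_assoc], hQM]
    rw [h1, h2]
    have h4 : Ao.submatrix id J = A.submatrix id J - Pi * A.submatrix id J := by
      rw [hAo]
      ext i j
      simp [Matrix.submatrix_apply, Matrix.sub_apply, Matrix.mul_apply]
    rw [show α = pJ J *ᵥ ((Ao.submatrix id J)ᵀ *ᵥ (A *ᵥ (x - xstar))) from by rw [hα, hMJr]]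
    rw [h4, Matrix.sub_mulVec]
    abel
  -- block expectation bound
  have hblock : ∀ (x : Fin n → ℝ) (w : Fin n → ℝ), A *ᵥ (x - xstar) = Ao *ᵥ w →
      (∑ J : Fin l → Fin n, (∏ t, p (J t)) *
        ((A *ᵥ (step J x - xstar)) ⬝ᵥ (A *ᵥ (step J x - xstar))))
      ≤ (1 - lamMinPos (Aoᵀ * Ao) / frobSq Ao) ^ l *
          ((A *ᵥ (x - xstar)) ⬝ᵥ (A *ᵥ (x - xstar))) := by
    intro x w hw
    have hterm : ∀ J : Fin l → Fin n,
        (A *ᵥ (step J x - xstar)) ⬝ᵥ (A *ᵥ (step J x - xstar))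
        ≤ (traj (colStep Ao) (A *ᵥ (x - xstar)) l J) ⬝ᵥ
            (traj (colStep Ao) (A *ᵥ (x - xstar)) l J) := by
      intro J
      rw [hstepz J x]
      obtain ⟨c, hc⟩ := traj_colStep_rep Ao (A *ᵥ (x - xstar)) l J
      rw [hc]
      exact proj_opt (hpJ' J) (A *ᵥ (x - xstar)) c
    calc ∑ J : Fin l → Fin n, (∏ t, p (J t)) *
          ((A *ᵥ (step J x - xstar)) ⬝ᵥ (A *ᵥ (step J x - xstar)))
        ≤ ∑ J : Fin l → Fin n, (∏ t, p (J t)) *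
            ((traj (colStep Ao) (A *ᵥ (x - xstar)) l J) ⬝ᵥ
              (traj (colStep Ao) (A *ᵥ (x - xstar)) l J)) := by
          exact Finset.sum_le_sum fun J _ => mul_le_mul_of_nonneg_left (hterm J)
            (Finset.prod_nonneg fun t _ => hpnn _)
    _ ≤ (1 - lamMinPos (Aoᵀ * Ao) / frobSq Ao) ^ l *
          ((A *ᵥ (x - xstar)) ⬝ᵥ (A *ᵥ (x - xstar))) :=
        lemB Ao hAoF p hp (A *ᵥ (x - xstar)) w hw l
  -- invariant: residual differences stay in the range of Ao
  have hz0 : A *ᵥ (x0 - xstar) = Ao *ᵥ (x0 - xstar) := by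
    have hP0 : Pi *ᵥ (A *ᵥ (x0 - xstar)) = 0 := by
      rw [← hQ]
      have : ASᵀ *ᵥ (A *ᵥ (x0 - xstar)) = 0 := by
        have hsplit : A *ᵥ (x0 - xstar) = (A *ᵥ x0 - b) - (A *ᵥ xstar - b) := by
          rw [Matrix.mulVec_sub]; abel
        rw [hsplit, Matrix.mulVec_sub, hx0, hAS0 _ hnormal, sub_zero]
      rw [this, Matrix.mulVec_zero, Matrix.mulVec_zero]
    rw [hAo, Matrix.sub_mulVec, ← Matrix.mulVec_mulVec, hP0, sub_zero]
  have hinv : ∀ (k : ℕ) (ω : Fin k → (Fin l → Fin n)),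
      ∃ w, A *ᵥ (traj step x0 k ω - xstar) = Ao *ᵥ w := by
    intro k
    induction k with
    | zero => exact fun ω => ⟨x0 - xstar, hz0⟩
    | succ k ih =>
      intro ω
      obtain ⟨w, hw⟩ := ih (Fin.init ω)
      refine ⟨w - eJ (ω (Fin.last k)) *ᵥ (pJ (ω (Fin.last k)) *ᵥ
        ((Ao.submatrix id (ω (Fin.last k)))ᵀ *ᵥ
          (A *ᵥ (traj step x0 k (Fin.init ω) - xstar)))), ?_⟩
      show A *ᵥ (step (ω (Fin.last k)) (traj step x0 k (Fin.init ω)) - xstar) = _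
      rw [hstepz, hw, Matrix.mulVec_sub, ← hw]
      congr 1
      rw [Matrix.mulVec_mulVec (M := Ao) (N := eJ (ω (Fin.last k))), hAoeJ]
  -- final induction
  intro k
  induction k with
  | zero =>
    simp [traj]
  | succ k ih =>
    rw [sum_snoc_peel]
    have hterm : ∀ (J : Fin l → Fin n) (g : Fin k → (Fin l → Fin n)),
        (∏ i, ∏ t, p ((Fin.snoc g J : Fin (k+1) → (Fin l → Fin n)) i t)) *
          ((A *ᵥ (traj step x0 (k+1) (Fin.snoc g J) - xstar)) ⬝ᵥ
            (A *ᵥ (traj step x0 (k+1) (Fin.snoc g J) - xstar)))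
        = (∏ i, ∏ t, p (g i t)) * ((∏ t, p (J t)) *
            ((A *ᵥ (step J (traj step x0 k g) - xstar)) ⬝ᵥ
              (A *ᵥ (step J (traj step x0 k g) - xstar)))) := by
      intro J g
      have e1 : (∏ i, ∏ t, p ((Fin.snoc g J : Fin (k+1) → (Fin l → Fin n)) i t))
          = (∏ i, ∏ t, p (g i t)) * (∏ t, p (J t)) := by
        have hfun : ∀ i, (∏ t, p ((Fin.snoc g J : Fin (k+1) → (Fin l → Fin n)) i t))
            = (Fin.snoc (fun i' => ∏ t, p (g i' t)) (∏ t, p (J t)) : Fin (k+1) → ℝ) i := by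
          intro i
          refine Fin.lastCases ?_ ?_ i
          · simp
          · intro i'; simp
        calc ∏ i, ∏ t, p ((Fin.snoc g J : Fin (k+1) → (Fin l → Fin n)) i t)
            = ∏ i, (Fin.snoc (fun i' => ∏ t, p (g i' t)) (∏ t, p (J t)) : Fin (k+1) → ℝ) i :=
              Finset.prod_congr rfl fun i _ => hfun i
        _ = (∏ i, ∏ t, p (g i t)) * (∏ t, p (J t)) := Fin.prod_snoc _ _
      have e2 : traj step x0 (k+1) (Fin.snoc g J) = step J (traj step x0 k g) := by
        have h1 : (Fin.snoc g J : Fin (k+1) → (Fin l → Fin n)) (Fin.last k) = J := by simp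
        have h2 : Fin.init (Fin.snoc g J : Fin (k+1) → (Fin l → Fin n)) = g := by simp
        show step ((Fin.snoc g J : Fin (k+1) → (Fin l → Fin n)) (Fin.last k))
          (traj step x0 k (Fin.init (Fin.snoc g J : Fin (k+1) → (Fin l → Fin n)))) = _
        rw [h1, h2]
      rw [e1, e2]; ring
    calc ∑ J : Fin l → Fin n, ∑ g : Fin k → (Fin l → Fin n),
          (∏ i, ∏ t, p ((Fin.snoc g J : Fin (k+1) → (Fin l → Fin n)) i t)) *
            ((A *ᵥ (traj step x0 (k+1) (Fin.snoc g J) - xstar)) ⬝ᵥ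
              (A *ᵥ (traj step x0 (k+1) (Fin.snoc g J) - xstar)))
        = ∑ g : Fin k → (Fin l → Fin n), ∑ J : Fin l → Fin n,
            (∏ i, ∏ t, p (g i t)) * ((∏ t, p (J t)) *
              ((A *ᵥ (step J (traj step x0 k g) - xstar)) ⬝ᵥ
                (A *ᵥ (step J (traj step x0 k g) - xstar)))) := by
          rw [Finset.sum_comm]
          exact Finset.sum_congr rfl fun g _ => Finset.sum_congr rfl fun J _ => hterm J g
    _ = ∑ g : Fin k → (Fin l → Fin n), (∏ i, ∏ t, p (g i t)) *
          (∑ J : Fin l → Fin n, (∏ t, p (J t)) *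
            ((A *ᵥ (step J (traj step x0 k g) - xstar)) ⬝ᵥ
              (A *ᵥ (step J (traj step x0 k g) - xstar)))) :=
          Finset.sum_congr rfl fun g _ => (Finset.mul_sum _ _ _).symm
    _ ≤ ∑ g : Fin k → (Fin l → Fin n), (∏ i, ∏ t, p (g i t)) *
          ((1 - lamMinPos (Aoᵀ * Ao) / frobSq Ao) ^ l *
            ((A *ᵥ (traj step x0 k g - xstar)) ⬝ᵥ (A *ᵥ (traj step x0 k g - xstar)))) := by
          apply Finset.sum_le_sum
          intro g _
          apply mul_le_mul_of_nonneg_left _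
            (Finset.prod_nonneg fun i _ => Finset.prod_nonneg fun t _ => hpnn _)
          obtain ⟨w, hw⟩ := hinv k g
          exact hblock (traj step x0 k g) w hw
    _ = (1 - lamMinPos (Aoᵀ * Ao) / frobSq Ao) ^ l *
          ∑ g : Fin k → (Fin l → Fin n), (∏ i, ∏ t, p (g i t)) *
            ((A *ᵥ (traj step x0 k g - xstar)) ⬝ᵥ (A *ᵥ (traj step x0 k g - xstar))) := by
          rw [Finset.mul_sum]
          exact Finset.sum_congr rfl fun g _ => by ring
    _ ≤ (1 - lamMinPos (Aoᵀ * Ao) / frobSq Ao) ^ l *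
          ((1 - lamMinPos (Aoᵀ * Ao) / frobSq Ao) ^ (k * l) *
            ((A *ᵥ (x0 - xstar)) ⬝ᵥ (A *ᵥ (x0 - xstar)))) :=
          mul_le_mul_of_nonneg_left ih (pow_nonneg hrho l)
    _ = (1 - lamMinPos (Aoᵀ * Ao) / frobSq Ao) ^ ((k+1) * l) *
          ((A *ᵥ (x0 - xstar)) ⬝ᵥ (A *ᵥ (x0 - xstar))) := by
          rw [← mul_assoc, ← pow_add]
          ring_nf
end
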